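/- If I(G;x) = \prod_{i=1}^{\alpha}(1 + r_i x) has only real zeros (r_i > 0) and G has n vertices, then I(G \circ K_1; x) = (1+x)^{n-\alpha} \prod_{i=1}^{\alpha} (1 + (1 + r_i) x), and hence I(G \circ K_1; x) has only real zeros. -/

import Mathlib

open Polynomial

def OnlyRealZeros (P : Polynomial ℝ) : Prop :=
  ∀ z : ℂ, Polynomial.aeval z P = 0 → z.im = 0

open scoped Classical in
/-- The independence polynomial of a finite simple graph. -/
noncomputable def indepPoly {V : Type} [Fintype V] (G : SimpleGraph V) : Polynomial ℝ :=
  ∑ s ∈ Finset.univ.filter (fun s : Finset V => ∀ u ∈ s, ∀ v ∈ s, ¬ G.Adj u v),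
    (X : Polynomial ℝ) ^ s.card

/-- The corona `G ∘ K₁`: attach a private pendant vertex to each vertex of `G`. -/
def coronaK1 {V : Type} (G : SimpleGraph V) : SimpleGraph (V ⊕ V) :=
  SimpleGraph.fromRel (fun x y =>
    match x, y with
    | Sum.inl a, Sum.inl b => G.Adj a b
    | Sum.inl a, Sum.inr b => a = b
    | _, _ => False)

/-! An independent set of `G ∘ K₁` is an independent set `S` of `G` together with an arbitrary
set of pendant vertices hanging off `V ∖ S`, so
`I(G ∘ K₁; x) = ∑_S x^|S| (1 + x)^(n - |S|) = (1 + x)ⁿ I(G; x / (1 + x))`.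
After substituting the factorisation of `I(G)`, each factor `1 + rᵢ x / (1 + x)` absorbs one
factor `1 + x` and becomes `1 + (1 + rᵢ) x`; the two polynomials agree away from `x = -1`, hence
everywhere. A product of real linear factors has only real zeros. -/

open Finset

section Corona

variable {V : Type} (G : SimpleGraph V)

@[simp]
lemma coronaK1_adj_inl_inl (a b : V) : (coronaK1 G).Adj (.inl a) (.inl b) ↔ G.Adj a b := by
  simp only [coronaK1, SimpleGraph.fromRel_adj, ne_eq, Sum.inl.injEq]
  exact ⟨fun h => h.2.elim id G.adj_symm, fun h => ⟨G.ne_of_adj h, .inl h⟩⟩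

@[simp]
lemma coronaK1_adj_inl_inr (a b : V) : (coronaK1 G).Adj (.inl a) (.inr b) ↔ a = b := by
  simp [coronaK1]

@[simp]
lemma coronaK1_adj_inr_inl (a b : V) : (coronaK1 G).Adj (.inr a) (.inl b) ↔ b = a := by
  simp [coronaK1]

@[simp]
lemma coronaK1_adj_inr_inr (a b : V) : ¬ (coronaK1 G).Adj (.inr a) (.inr b) := by
  simp [coronaK1]

lemma coronaK1_indep_disjSum_iff (s t : Finset V) :
    (∀ u ∈ s.disjSum t, ∀ v ∈ s.disjSum t, ¬ (coronaK1 G).Adj u v) ↔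
      (∀ u ∈ s, ∀ v ∈ s, ¬ G.Adj u v) ∧ Disjoint s t := by
  simp only [Sum.forall, inl_mem_disjSum, inr_mem_disjSum, coronaK1_adj_inl_inl,
    coronaK1_adj_inl_inr, coronaK1_adj_inr_inl, coronaK1_adj_inr_inr, disjoint_left]
  aesop

end Corona

open scoped Classical in
lemma indepPoly_coronaK1 {V : Type} [Fintype V] (G : SimpleGraph V) :
    indepPoly (coronaK1 G) =
      ∑ s ∈ univ.filter (fun s : Finset V => ∀ u ∈ s, ∀ v ∈ s, ¬ G.Adj u v),
        X ^ s.card * (1 + X) ^ (Fintype.card V - s.card) := by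
  have hsplit : indepPoly (coronaK1 G) =
      ∑ p ∈ (univ.filter (fun s : Finset V => ∀ u ∈ s, ∀ v ∈ s, ¬ G.Adj u v)).sigma
          (fun s => sᶜ.powerset), X ^ (p.1.card + p.2.card) := by
    rw [indepPoly]
    refine sum_nbij' (fun T => ⟨T.toLeft, T.toRight⟩) (fun p => p.1.disjSum p.2)
      ?_ ?_ (fun T _ => toLeft_disjSum_toRight) (fun p _ => by simp) ?_
    · intro T hT
      simp only [mem_filter, mem_univ, true_and] at hT
      rw [← toLeft_disjSum_toRight (u := T), coronaK1_indep_disjSum_iff] at hT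
      simpa [subset_compl_iff_disjoint_left] using hT
    · intro p hp
      simp only [mem_sigma, mem_filter, mem_univ, true_and, mem_powerset,
        subset_compl_iff_disjoint_left] at hp
      simp only [mem_filter, mem_univ, true_and]
      exact (coronaK1_indep_disjSum_iff G _ _).2 hp
    · intro T _
      rw [← card_disjSum, toLeft_disjSum_toRight]
  rw [hsplit, sum_sigma]
  refine sum_congr rfl fun s _ => ?_
  have hpow := prod_one_add (f := fun _ => (X : ℝ[X])) sᶜ
  simp only [prod_const, card_compl] at hpow
  simp only [pow_add, ← mul_sum, hpow]

lemma natDegree_indepPoly_le {V : Type} [Fintype V] (G : SimpleGraph V) :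
    (indepPoly G).natDegree ≤ Fintype.card V := by
  rw [indepPoly]
  refine natDegree_sum_le_of_forall_le _ _ fun s _ => ?_
  simpa using card_le_univ s

lemma natDegree_prod_one_add_C_mul_X {ι : Type*} (s : Finset ι) {r : ι → ℝ}
    (hr : ∀ i ∈ s, r i ≠ 0) : (∏ i ∈ s, (1 + C (r i) * X)).natDegree = s.card := by
  rw [natDegree_prod _ _ fun i _ h => by simpa using congrArg (eval 0) h]
  refine (sum_congr rfl fun i hi => ?_).trans (card_eq_sum_ones s).symm
  rw [add_comm, ← C_1, natDegree_linear (hr i hi)]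

lemma eval_indepPoly_coronaK1 {V : Type} [Fintype V] (G : SimpleGraph V) {x : ℝ}
    (hx : 1 + x ≠ 0) :
    (indepPoly (coronaK1 G)).eval x =
      (1 + x) ^ Fintype.card V * (indepPoly G).eval (x / (1 + x)) := by
  classical
  rw [indepPoly_coronaK1, indepPoly, eval_finsetSum, eval_finsetSum, mul_sum]
  refine sum_congr rfl fun s _ => ?_
  simp only [eval_mul, eval_pow, eval_add, eval_one, eval_X]
  rw [pow_sub₀ _ hx (card_le_univ s), div_pow]
  field_simp

lemma pow_mul_prod_one_add_mul_div {ι K : Type*} [Field K] (s : Finset ι) (r : ι → K)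
    {x : K} (hx : 1 + x ≠ 0) {n : ℕ} (hn : s.card ≤ n) :
    (1 + x) ^ n * ∏ i ∈ s, (1 + r i * (x / (1 + x))) =
      (1 + x) ^ (n - s.card) * ∏ i ∈ s, (1 + (1 + r i) * x) := by
  rw [← Nat.sub_add_cancel hn, pow_add, Nat.add_sub_cancel, mul_assoc, ← prod_const,
    ← prod_mul_distrib]
  congr 1
  refine prod_congr rfl fun i _ => ?_
  field_simp
  ring

lemma OnlyRealZeros.one : OnlyRealZeros 1 := by
  simp [OnlyRealZeros]

lemma OnlyRealZeros.mul {P Q : ℝ[X]} (hP : OnlyRealZeros P) (hQ : OnlyRealZeros Q) :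
    OnlyRealZeros (P * Q) := fun z hz => by
  rw [map_mul, mul_eq_zero] at hz
  exact hz.elim (hP z) (hQ z)

lemma OnlyRealZeros.pow {P : ℝ[X]} (hP : OnlyRealZeros P) (m : ℕ) : OnlyRealZeros (P ^ m) := by
  induction m with
  | zero => simpa using OnlyRealZeros.one
  | succ m ih => simpa [pow_succ] using ih.mul hP

lemma OnlyRealZeros.prod {ι : Type*} (s : Finset ι) {P : ι → ℝ[X]}
    (hP : ∀ i ∈ s, OnlyRealZeros (P i)) : OnlyRealZeros (∏ i ∈ s, P i) :=
  prod_induction _ _ (fun _ _ => OnlyRealZeros.mul) OnlyRealZeros.one hP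

lemma onlyRealZeros_one_add_C_mul_X (a : ℝ) : OnlyRealZeros (1 + C a * X) := fun z hz => by
  have him := congrArg Complex.im hz
  simp only [map_add, map_one, map_mul, aeval_C, Complex.coe_algebraMap, aeval_X, Complex.add_im,
    Complex.one_im, Complex.mul_im, Complex.ofReal_re, Complex.ofReal_im, zero_mul, add_zero,
    zero_add, Complex.zero_im, mul_eq_zero] at him
  rcases him with rfl | him
  · simp at hz
  · exact him

theorem stmt_18 {V : Type} [Fintype V] (G : SimpleGraph V) (n α : ℕ)
    (hn : n = Fintype.card V) (r : Fin α → ℝ) (hr : ∀ i, 0 < r i)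
    (hfac : indepPoly G = ∏ i, (1 + C (r i) * X)) :
    indepPoly (coronaK1 G) =
      (1 + X) ^ (n - α) * ∏ i, (1 + C (1 + r i) * X) ∧
    OnlyRealZeros (indepPoly (coronaK1 G)) := by
  have hαn : α ≤ n := by
    simpa [hn, hfac, natDegree_prod_one_add_C_mul_X _ fun i _ => (hr i).ne'] using
      natDegree_indepPoly_le G
  have hcorona : indepPoly (coronaK1 G) = (1 + X) ^ (n - α) * ∏ i, (1 + C (1 + r i) * X) := by
    refine eq_of_infinite_eval_eq _ _ ((Set.finite_singleton (-1 : ℝ)).infinite_compl.mono ?_)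
    intro x hx
    have hx : 1 + x ≠ 0 := fun h => hx (by rw [Set.mem_singleton_iff]; linarith)
    rw [Set.mem_ofPred_eq, eval_indepPoly_coronaK1 G hx, hfac, ← hn]
    simpa [eval_prod] using pow_mul_prod_one_add_mul_div univ r hx (by simpa using hαn)
  refine ⟨hcorona, hcorona ▸ ?_⟩
  have hX : OnlyRealZeros (1 + X) := by simpa using onlyRealZeros_one_add_C_mul_X 1
  exact (hX.pow _).mul (.prod _ fun i _ => onlyRealZeros_one_add_C_mul_X _)
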